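/- The matrices A = [[1,2],[0,1]] and B = [[1,0],[-2,1]] generate a free subgroup of SL(2,ℤ); in particular, no nontrivial reduced word in A and B equals the identity matrix. -/

import Mathlib

open UpperHalfPlane


/-- The matrices A = [[1,2],[0,1]] and B = [[1,0],[-2,1]] generate a free subgroup
of SL(2,ℤ): the lift of the free group on two generators sending them to A and B
is injective, so no nontrivial reduced word in A and B is the identity. -/
theorem stmt_0
    (A B : Matrix.SpecialLinearGroup (Fin 2) ℤ)
    (hA : (A : Matrix (Fin 2) (Fin 2) ℤ) = !![1, 2; 0, 1])
    (hB : (B : Matrix (Fin 2) (Fin 2) ℤ) = !![1, 0; -2, 1]) :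
    Function.Injective
      (FreeGroup.lift (fun b : Bool => if b then A else B) :
        FreeGroup Bool → Matrix.SpecialLinearGroup (Fin 2) ℤ) := by
  -- the ping-pong "height" functions: Re z for A, Re(-1/z) for B
  set ψ : Bool → ℍ → ℝ := fun b z => if b then (z : ℂ).re else (-(z : ℂ)⁻¹).re with hψ
  have hψf : ∀ z : ℍ, (-(z : ℂ)⁻¹).re
      = -((z : ℂ).re / ((z : ℂ).re * (z : ℂ).re + (z : ℂ).im * (z : ℂ).im)) := by
    intro z
    rw [Complex.neg_re, Complex.inv_re, Complex.normSq_apply]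
  have him : ∀ z : ℍ, 0 < (z : ℂ).im := fun z => z.2
  have hn : ∀ z : ℍ, 0 < (z : ℂ).re * (z : ℂ).re + (z : ℂ).im * (z : ℂ).im := by
    intro z; nlinarith [him z, sq_nonneg (z : ℂ).re]
  -- key translation identities
  have keyA : ∀ z : ℍ, ((A • z : ℍ) : ℂ) = (z : ℂ) + 2 := by
    intro z
    rw [UpperHalfPlane.specialLinearGroup_apply]
    simp [UpperHalfPlane.coe_mk, hA]
  have keyB : ∀ z : ℍ, (-((B • z : ℍ) : ℂ)⁻¹).re = (-(z : ℂ)⁻¹).re + 2 := by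
    intro z
    have hz : (z : ℂ) ≠ 0 := ne_zero z
    have hden : (-2 : ℂ) * z + 1 ≠ 0 := by
      intro h
      have := congrArg Complex.im h
      simp [Complex.add_im, Complex.mul_im] at this
      exact z.im_ne_zero (by linarith)
    have hcoe : ((B • z : ℍ) : ℂ) = ((1 : ℂ) * z + 0) / ((-2) * z + 1) := by
      rw [UpperHalfPlane.specialLinearGroup_apply]
      simp [UpperHalfPlane.coe_mk, hB]
    have key : (-((B • z : ℍ) : ℂ)⁻¹) = 2 + -(z : ℂ)⁻¹ := by
      rw [hcoe]; field_simp [hz]; ring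
    rw [key]; simp [Complex.add_re]; ring
  have key : ∀ (b : Bool) (z : ℍ), ψ b ((if b then A else B) • z) = ψ b z + 2 := by
    intro b z
    cases b
    · show (-((B • z : ℍ) : ℂ)⁻¹).re = (-(z : ℂ)⁻¹).re + 2
      exact keyB z
    · show ((A • z : ℍ) : ℂ).re = (z : ℂ).re + 2
      rw [keyA z]
      simp
  have keyinv : ∀ (b : Bool) (z : ℍ), ψ b ((if b then A else B)⁻¹ • z) = ψ b z - 2 := by
    intro b z
    have := key b ((if b then A else B)⁻¹ • z)
    rw [smul_inv_smul] at this
    linarith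
  -- the ping-pong sets
  set X : Bool → Set ℍ := fun b => {z | 1 ≤ ψ b z} with hX
  set Y : Bool → Set ℍ := fun b => {z | ψ b z ≤ -1} with hY
  -- pointwise incompatibilities
  have c1 : ∀ z : ℍ, 1 ≤ ψ true z → 1 ≤ ψ false z → False := by
    intro z h1 h2
    simp only [hψ, if_true, if_false] at h1 h2
    rw [hψf z] at h2
    rw [← neg_div] at h2
    have := (le_div_iff₀ (hn z)).mp h2
    nlinarith [hn z]
  have c2 : ∀ z : ℍ, ψ true z ≤ -1 → ψ false z ≤ -1 → False := by
    intro z h1 h2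
    simp only [hψ, if_true, if_false] at h1 h2
    rw [hψf z, ← neg_div] at h2
    have := (div_le_iff₀ (hn z)).mp h2
    nlinarith [hn z]
  have c3 : ∀ z : ℍ, 1 ≤ ψ true z → ψ false z ≤ -1 → False := by
    intro z h1 h2
    simp only [hψ, if_true, if_false] at h1 h2
    rw [hψf z, ← neg_div] at h2
    have := (div_le_iff₀ (hn z)).mp h2
    nlinarith [him z]
  have c4 : ∀ z : ℍ, 1 ≤ ψ false z → ψ true z ≤ -1 → False := by
    intro z h1 h2
    simp only [hψ, if_true, if_false] at h1 h2
    rw [hψf z, ← neg_div] at h1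
    have := (le_div_iff₀ (hn z)).mp h1
    nlinarith [him z]
  apply FreeGroup.injective_lift_of_ping_pong _ X Y
  · -- nonempty
    intro b
    cases b
    · refine ⟨⟨⟨-1/2, 1/4⟩, by norm_num⟩, ?_⟩
      show 1 ≤ ψ false _
      simp only [hψ, if_false]
      rw [Complex.neg_re, Complex.inv_re, Complex.normSq_apply]
      norm_num [UpperHalfPlane.coe_mk]
    · refine ⟨⟨⟨2, 1⟩, by norm_num⟩, ?_⟩
      show (1 : ℝ) ≤ ((⟨⟨2, 1⟩, by norm_num⟩ : ℍ) : ℂ).re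
      norm_num
  · -- X pairwise disjoint
    intro b c hbc
    have : ∀ z : ℍ, z ∈ X b → z ∈ X c → False := by
      intro z h1 h2
      cases b <;> cases c <;> first
        | exact hbc rfl
        | exact c1 z h2 h1
        | exact c1 z h1 h2
    exact Set.disjoint_left.mpr fun {z} hzb hzc => this z hzb hzc
  · -- Y pairwise disjoint
    intro b c hbc
    have : ∀ z : ℍ, z ∈ Y b → z ∈ Y c → False := by
      intro z h1 h2
      cases b <;> cases c <;> first
        | exact hbc rfl
        | exact c2 z h2 h1
        | exact c2 z h1 h2
    exact Set.disjoint_left.mpr fun {z} hzb hzc => this z hzb hzc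
  · -- X vs Y disjoint
    intro b c
    have : ∀ z : ℍ, z ∈ X b → z ∈ Y c → False := by
      intro z h1 h2
      cases b <;> cases c
      · exact absurd (le_trans (show (1:ℝ) ≤ ψ false z from h1)
          (show ψ false z ≤ -1 from h2)) (by norm_num)
      · exact c4 z h1 h2
      · exact c3 z h1 h2
      · exact absurd (le_trans (show (1:ℝ) ≤ ψ true z from h1)
          (show ψ true z ≤ -1 from h2)) (by norm_num)
    exact Set.disjoint_left.mpr fun {z} hzb hzc => this z hzb hzc
  · -- g • (Y b)ᶜ ⊆ X b
    intro b
    rintro z ⟨w, hw, rfl⟩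
    simp only [Set.mem_compl_iff, hY, Set.mem_setOf_eq, not_le] at hw
    show 1 ≤ ψ b _
    rw [key b w]
    linarith
  · -- g⁻¹ • (X b)ᶜ ⊆ Y b
    intro b
    rintro z ⟨w, hw, rfl⟩
    simp only [Set.mem_compl_iff, hX, Set.mem_setOf_eq, not_le] at hw
    show ψ b ((if b then A else B)⁻¹ • w) ≤ -1
    rw [keyinv b w]
    linarith
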